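/- arXiv:2109.12070 — 7 statements merged into one kernel-verified Lean document; each statement's English description precedes it below -/
import Mathlib

section
/- Let n = c·ℓ with c ≥ 1, ℓ ≥ 1, and let loc : {0,…,n−1} → {0,…,ℓ−1} be such that on each group of ℓ consecutive workers {gℓ,…,(g+1)ℓ−1} (0 ≤ g ≤ c−1) the function loc takes every value in {0,…,ℓ−1} exactly once. Let κ ≥ 1 with κ−1 ≤ c·ℓ, and set c₁ = ⌊(κ−1)/c⌋ and c₂ = (κ−1) − c·c₁. Then the maximum of Σ_{w=0}^{n−1} t(w) over all computation profiles t with A(t) ≤ κ−1 equals n(ℓ−1)/2 + c·Σ_{i=0}^{c₁−1}(ℓ−i) + c₂·(ℓ−c₁). -/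
open Finset

private lemma sum_range_mul_split (f : ℕ → ℕ) (m l : ℕ) :
    ∑ w ∈ range (m * l), f w = ∑ g ∈ range m, ∑ i ∈ range l, f (g * l + i) := by
  induction m with
  | zero => simp
  | succ m ih =>
    rw [Nat.succ_mul, Finset.sum_range_add, ih, Finset.sum_range_succ]

private lemma sum_ind_le (l a : ℕ) (ha : a < l) :
    (∑ v ∈ range l, if a ≤ v then 1 else 0) = l - a := by
  rw [← Finset.sum_filter]
  have h : (range l).filter (fun v => a ≤ v) = Finset.Ico a l := by
    ext x; simp [Finset.mem_Ico]; omega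
  rw [h, Finset.sum_const, smul_eq_mul, mul_one, Nat.card_Ico]

private lemma filter_lt_range (l a : ℕ) (h : a ≤ l) :
    (range l).filter (fun v => v < a) = range a := by
  ext x; simp; omega

/-- The maximum total number of processed slots, over all computation
profiles in which a fixed class (appearing once per worker, at slot `loc w`, and at
every location exactly once within each group of `ℓ` consecutive workers) is
processed at most `κ - 1` times, equals
`n(ℓ-1)/2 + c·Σ_{i<c₁}(ℓ-i) + c₂·(ℓ-c₁)` where `c₁ = ⌊(κ-1)/c⌋` and
`c₂ = (κ-1) - c·c₁`. -/
theorem stmt0 (c ℓ n : ℕ) (hc : 1 ≤ c) (hl : 1 ≤ ℓ) (hn : n = c * ℓ)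
    (loc : ℕ → ℕ) (hloc : ∀ w < n, loc w < ℓ)
    (hgroup : ∀ g < c, ∀ v < ℓ, ∃! i, i < ℓ ∧ loc (g * ℓ + i) = v)
    (κ : ℕ) (hκ : 1 ≤ κ) (hκn : κ - 1 ≤ c * ℓ)
    (c₁ c₂ : ℕ) (hc₁ : c₁ = (κ - 1) / c) (hc₂ : c₂ = (κ - 1) - c * c₁) :
    IsGreatest
      {S : ℕ | ∃ t : ℕ → ℕ, (∀ w < n, t w ≤ ℓ) ∧
        ((Finset.range n).filter (fun w => loc w < t w)).card ≤ κ - 1 ∧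
        S = ∑ w ∈ Finset.range n, t w}
      (n * (ℓ - 1) / 2 + c * ∑ i ∈ Finset.range c₁, (ℓ - i) + c₂ * (ℓ - c₁)) := by
  have hc0 : 0 < c := hc
  have hl0 : 0 < ℓ := hl
  -- basic arithmetic facts about c₁, c₂
  have hle : c * c₁ ≤ κ - 1 := by
    rw [hc₁, mul_comm]; exact Nat.div_mul_le_self _ _
  have hK : c * c₁ + c₂ = κ - 1 := by rw [hc₂]; omega
  have hc₂c : c₂ < c := by
    have : c₂ = (κ - 1) % c := by rw [hc₂, hc₁, Nat.mod_def]
    rw [this]; exact Nat.mod_lt _ hc0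
  have hc₁l : c₁ ≤ ℓ := by
    rw [hc₁]
    calc (κ - 1) / c ≤ (c * ℓ) / c := Nat.div_le_div_right hκn
    _ = ℓ := Nat.mul_div_cancel_left ℓ hc0
  have hc₁l' : c₂ ≠ 0 → c₁ < ℓ := by
    intro h
    rcases lt_or_eq_of_le hc₁l with h' | h'
    · exact h'
    · exfalso
      have : c * c₁ = c * ℓ := by rw [h']
      omega
  -- the group bijection lemma
  have hlt : ∀ g < c, ∀ i < ℓ, g * ℓ + i < n := by
    intro g hg i hi
    rw [hn]
    calc g * ℓ + i < g * ℓ + ℓ := by omega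
    _ = (g + 1) * ℓ := by ring
    _ ≤ c * ℓ := Nat.mul_le_mul_right ℓ (by omega)
  have hgb : ∀ g < c, ∀ f : ℕ → ℕ,
      ∑ i ∈ range ℓ, f (loc (g * ℓ + i)) = ∑ v ∈ range ℓ, f v := by
    intro g hg f
    have himg : (range ℓ).image (fun i => loc (g * ℓ + i)) = range ℓ := by
      apply Finset.Subset.antisymm
      · intro v hv
        simp only [mem_image, mem_range] at hv ⊢
        obtain ⟨i, hi, rfl⟩ := hv
        exact hloc _ (hlt g hg i hi)
      · intro v hv
        simp only [mem_image, mem_range] at hv ⊢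
        obtain ⟨i, ⟨hi, hiv⟩, -⟩ := hgroup g hg v hv
        exact ⟨i, hi, hiv⟩
    have hinj : ∀ x ∈ range ℓ, ∀ y ∈ range ℓ,
        loc (g * ℓ + x) = loc (g * ℓ + y) → x = y := by
      intro x hx y hy hxy
      simp only [mem_range] at hx hy
      have hv : loc (g * ℓ + x) < ℓ := hloc _ (hlt g hg x hx)
      obtain ⟨k, -, huniq⟩ := hgroup g hg _ hv
      have h1 := huniq x ⟨hx, rfl⟩
      have h2 := huniq y ⟨hy, hxy.symm⟩
      omega
    calc ∑ i ∈ range ℓ, f (loc (g * ℓ + i))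
        = ∑ v ∈ (range ℓ).image (fun i => loc (g * ℓ + i)), f v :=
          (Finset.sum_image hinj).symm
    _ = ∑ v ∈ range ℓ, f v := by rw [himg]
  have hsplit : ∀ f : ℕ → ℕ,
      ∑ w ∈ range n, f w = ∑ g ∈ range c, ∑ i ∈ range ℓ, f (g * ℓ + i) := by
    intro f; rw [hn]; exact sum_range_mul_split f c ℓ
  have hbase : ∑ w ∈ range n, loc w = c * ∑ v ∈ range ℓ, v := by
    rw [hsplit loc]
    have h : ∀ g ∈ range c, ∑ i ∈ range ℓ, loc (g * ℓ + i) = ∑ v ∈ range ℓ, v :=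
      fun g hg => hgb g (mem_range.mp hg) (fun v => v)
    rw [Finset.sum_congr rfl h, Finset.sum_const, card_range, smul_eq_mul]
  have hhalf : n * (ℓ - 1) / 2 = c * ∑ v ∈ range ℓ, v := by
    have h2 : n * (ℓ - 1) = (c * ∑ v ∈ range ℓ, v) * 2 := by
      calc n * (ℓ - 1) = c * (ℓ * (ℓ - 1)) := by rw [hn]; ring
      _ = c * ((∑ v ∈ range ℓ, v) * 2) := by rw [Finset.sum_range_id_mul_two]
      _ = (c * ∑ v ∈ range ℓ, v) * 2 := by ring
    rw [h2, Nat.mul_div_cancel _ two_pos]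
  have hdiv : ∀ g : ℕ, ∀ i < ℓ, (g * ℓ + i) / ℓ = g := by
    intro g i hi
    rw [add_comm, Nat.add_mul_div_right _ _ hl0, Nat.div_eq_of_lt hi, zero_add]
  -- the key arithmetic identity
  have hmin : ∑ v ∈ range ℓ, min (κ - 1) (c * (v + 1))
      = c * (∑ i ∈ range c₁, (ℓ - i)) + c₂ * (ℓ - c₁) := by
    have h1 : ∑ v ∈ range ℓ, min (κ - 1) (c * (v + 1))
        = (∑ v ∈ range c₁, c * (v + 1)) + (ℓ - c₁) * (κ - 1) := by
      have hll : ℓ = c₁ + (ℓ - c₁) := by omega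
      conv_lhs => rw [hll]
      rw [Finset.sum_range_add]
      congr 1
      · apply Finset.sum_congr rfl
        intro v hv
        simp only [mem_range] at hv
        apply Nat.min_eq_right
        calc c * (v + 1) ≤ c * c₁ := Nat.mul_le_mul_left c (by omega)
        _ ≤ κ - 1 := hle
      · have : ∀ j ∈ range (ℓ - c₁), min (κ - 1) (c * (c₁ + j + 1)) = κ - 1 := by
          intro j hj
          apply Nat.min_eq_left
          calc κ - 1 = c * c₁ + c₂ := hK.symm
          _ ≤ c * c₁ + c := by omega
          _ = c * (c₁ + 1) := by ring
          _ ≤ c * (c₁ + j + 1) := Nat.mul_le_mul_left c (by omega)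
        rw [Finset.sum_congr rfl this, Finset.sum_const, card_range, smul_eq_mul]
    have h2 : ∑ i ∈ range c₁, (ℓ - i)
        = c₁ * (ℓ - c₁) + ∑ v ∈ range c₁, (v + 1) := by
      calc ∑ i ∈ range c₁, (ℓ - i)
          = ∑ i ∈ range c₁, ((ℓ - c₁) + (c₁ - i)) := by
            apply Finset.sum_congr rfl
            intro i hi; simp only [mem_range] at hi; omega
      _ = c₁ * (ℓ - c₁) + ∑ i ∈ range c₁, (c₁ - i) := by
            rw [Finset.sum_add_distrib, Finset.sum_const, card_range, smul_eq_mul]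
      _ = c₁ * (ℓ - c₁) + ∑ v ∈ range c₁, (v + 1) := by
            congr 1
            rw [← Finset.sum_range_reflect (fun v => v + 1) c₁]
            apply Finset.sum_congr rfl
            intro i hi; simp only [mem_range] at hi; omega
    rw [h1, h2, ← hK, ← Finset.mul_sum]
    ring
  constructor
  · -- membership: the greedy profile achieves the value
    refine ⟨fun w => if loc w < c₁ ∨ (loc w = c₁ ∧ w / ℓ < c₂) then ℓ else loc w,
      ?_, ?_, ?_⟩
    · intro w hw
      dsimp only
      split
      · exact le_rfl
      · exact (hloc w hw).le
    · have hfeq : (range n).filter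
          (fun w => loc w < if loc w < c₁ ∨ (loc w = c₁ ∧ w / ℓ < c₂) then ℓ else loc w)
          = (range n).filter (fun w => loc w < c₁ ∨ (loc w = c₁ ∧ w / ℓ < c₂)) := by
        apply Finset.filter_congr
        intro w hw
        simp only [mem_range] at hw
        split_ifs with h
        · simpa [h] using hloc w hw
        · simp [h]
      rw [hfeq, Finset.card_filter, hsplit]
      have hinner : ∀ g ∈ range c,
          (∑ i ∈ range ℓ, if loc (g * ℓ + i) < c₁ ∨ (loc (g * ℓ + i) = c₁ ∧ (g * ℓ + i) / ℓ < c₂) then 1 else 0)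
          = c₁ + (if g < c₂ then 1 else 0) := by
        intro g hg
        simp only [mem_range] at hg
        have step1 : (∑ i ∈ range ℓ, if loc (g * ℓ + i) < c₁ ∨ (loc (g * ℓ + i) = c₁ ∧ (g * ℓ + i) / ℓ < c₂) then 1 else 0)
            = ∑ i ∈ range ℓ, (fun v => if v < c₁ ∨ (v = c₁ ∧ g < c₂) then 1 else 0) (loc (g * ℓ + i)) := by
          apply Finset.sum_congr rfl
          intro i hi
          simp only [mem_range] at hi
          rw [hdiv g i hi]
        rw [step1, hgb g hg (fun v => if v < c₁ ∨ (v = c₁ ∧ g < c₂) then 1 else 0)]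
        have step2 : ∀ v ∈ range ℓ,
            (if v < c₁ ∨ (v = c₁ ∧ g < c₂) then 1 else 0)
            = (if v < c₁ then 1 else 0) + (if v = c₁ ∧ g < c₂ then 1 else 0) := by
          intro v hv
          split_ifs <;> omega
        rw [Finset.sum_congr rfl step2, Finset.sum_add_distrib]
        congr 1
        · rw [← Finset.sum_filter, filter_lt_range ℓ c₁ hc₁l, Finset.sum_const,
            card_range, smul_eq_mul, mul_one]
        · by_cases hg2 : g < c₂
          · have hc₁lt : c₁ < ℓ := hc₁l' (by omega)
            simp only [hg2, and_true]
            rw [Finset.sum_ite_eq' (range ℓ) c₁ (fun _ => 1)]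
            simp [hc₁lt, hg2]
          · simp [hg2]
      rw [Finset.sum_congr rfl hinner, Finset.sum_add_distrib, Finset.sum_const,
        card_range, smul_eq_mul, ← Finset.sum_filter, filter_lt_range c c₂ hc₂c.le,
        Finset.sum_const, card_range, smul_eq_mul, mul_one]
      omega
    · -- the value of the greedy profile
      rw [hsplit]
      have hinner : ∀ g ∈ range c,
          (∑ i ∈ range ℓ, if loc (g * ℓ + i) < c₁ ∨ (loc (g * ℓ + i) = c₁ ∧ (g * ℓ + i) / ℓ < c₂) then ℓ else loc (g * ℓ + i))
          = (∑ v ∈ range ℓ, v) + ((∑ i ∈ range c₁, (ℓ - i)) + (if g < c₂ then ℓ - c₁ else 0)) := by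
        intro g hg
        simp only [mem_range] at hg
        have step1 : (∑ i ∈ range ℓ, if loc (g * ℓ + i) < c₁ ∨ (loc (g * ℓ + i) = c₁ ∧ (g * ℓ + i) / ℓ < c₂) then ℓ else loc (g * ℓ + i))
            = ∑ i ∈ range ℓ, (fun v => if v < c₁ ∨ (v = c₁ ∧ g < c₂) then ℓ else v) (loc (g * ℓ + i)) := by
          apply Finset.sum_congr rfl
          intro i hi
          simp only [mem_range] at hi
          rw [hdiv g i hi]
        rw [step1, hgb g hg (fun v => if v < c₁ ∨ (v = c₁ ∧ g < c₂) then ℓ else v)]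
        have step2 : ∀ v ∈ range ℓ,
            (if v < c₁ ∨ (v = c₁ ∧ g < c₂) then ℓ else v)
            = v + ((if v < c₁ then ℓ - v else 0) + (if v = c₁ ∧ g < c₂ then ℓ - c₁ else 0)) := by
          intro v hv
          simp only [mem_range] at hv
          split_ifs <;> omega
        rw [Finset.sum_congr rfl step2, Finset.sum_add_distrib]
        congr 1
        rw [Finset.sum_add_distrib]
        congr 1
        · rw [← Finset.sum_filter, filter_lt_range ℓ c₁ hc₁l]
        · by_cases hg2 : g < c₂
          · have hc₁lt : c₁ < ℓ := hc₁l' (by omega)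
            simp only [hg2, and_true]
            rw [Finset.sum_ite_eq' (range ℓ) c₁ (fun _ => ℓ - c₁)]
            simp [hc₁lt, hg2]
          · simp [hg2]
      rw [Finset.sum_congr rfl hinner, Finset.sum_add_distrib, Finset.sum_add_distrib,
        Finset.sum_const, card_range, smul_eq_mul, Finset.sum_const, card_range,
        smul_eq_mul, ← Finset.sum_filter, filter_lt_range c c₂ hc₂c.le,
        Finset.sum_const, card_range, smul_eq_mul, hhalf]
      ring
  · -- upper bound
    rintro S ⟨t, ht, hF, rfl⟩
    have h1 : ∑ w ∈ range n, t w
        ≤ (∑ w ∈ range n, loc w)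
          + ∑ w ∈ (range n).filter (fun w => loc w < t w), (ℓ - loc w) := by
      rw [← Finset.sum_filter_add_sum_filter_not (range n) (fun w => loc w < t w) t,
        ← Finset.sum_filter_add_sum_filter_not (range n) (fun w => loc w < t w) loc]
      have hA : ∑ w ∈ (range n).filter (fun w => loc w < t w), t w
          ≤ (∑ w ∈ (range n).filter (fun w => loc w < t w), loc w)
            + ∑ w ∈ (range n).filter (fun w => loc w < t w), (ℓ - loc w) := by
        rw [← Finset.sum_add_distrib]
        apply Finset.sum_le_sum
        intro w hw
        have hw' : w < n := mem_range.mp (mem_filter.mp hw).1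
        have := hloc w hw'
        have := ht w hw'
        omega
      have hB : ∑ w ∈ (range n).filter (fun w => ¬ loc w < t w), t w
          ≤ ∑ w ∈ (range n).filter (fun w => ¬ loc w < t w), loc w := by
        apply Finset.sum_le_sum
        intro w hw
        have := (mem_filter.mp hw).2
        omega
      omega
    have h2 : ∑ w ∈ (range n).filter (fun w => loc w < t w), (ℓ - loc w)
        ≤ ∑ v ∈ range ℓ, min (κ - 1) (c * (v + 1)) := by
      have hrw : ∑ w ∈ (range n).filter (fun w => loc w < t w), (ℓ - loc w)
          = ∑ w ∈ (range n).filter (fun w => loc w < t w),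
              ∑ v ∈ range ℓ, (if loc w ≤ v then 1 else 0) := by
        apply Finset.sum_congr rfl
        intro w hw
        exact (sum_ind_le ℓ (loc w) (hloc w (mem_range.mp (mem_filter.mp hw).1))).symm
      rw [hrw, Finset.sum_comm]
      apply Finset.sum_le_sum
      intro v hv
      rw [← Finset.card_filter]
      apply le_min
      · exact le_trans (Finset.card_filter_le _ _) hF
      · calc (((range n).filter (fun w => loc w < t w)).filter (fun w => loc w ≤ v)).card
            ≤ ((range n).filter (fun w => loc w ≤ v)).card :=
              Finset.card_le_card
                (Finset.filter_subset_filter _ (Finset.filter_subset _ _))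
        _ = ∑ g ∈ range c, ∑ i ∈ range ℓ, (if loc (g * ℓ + i) ≤ v then 1 else 0) := by
              rw [Finset.card_filter, hsplit]
        _ = ∑ g ∈ range c, ∑ u ∈ range ℓ, (if u ≤ v then 1 else 0) :=
              Finset.sum_congr rfl
                (fun g hg => hgb g (mem_range.mp hg) (fun u => if u ≤ v then 1 else 0))
        _ ≤ ∑ g ∈ range c, (v + 1) := by
              apply Finset.sum_le_sum
              intro g hg
              rw [← Finset.card_filter]
              have hsub : (range ℓ).filter (fun u => u ≤ v) ⊆ range (v + 1) := by
                intro x hx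
                simp only [mem_filter, mem_range] at hx ⊢
                omega
              calc ((range ℓ).filter (fun u => u ≤ v)).card
                  ≤ (range (v + 1)).card := Finset.card_le_card hsub
              _ = v + 1 := card_range _
        _ = c * (v + 1) := by rw [Finset.sum_const, card_range, smul_eq_mul]
    calc ∑ w ∈ range n, t w
        ≤ (∑ w ∈ range n, loc w)
          + ∑ w ∈ (range n).filter (fun w => loc w < t w), (ℓ - loc w) := h1
    _ ≤ (∑ w ∈ range n, loc w) + ∑ v ∈ range ℓ, min (κ - 1) (c * (v + 1)) :=
          Nat.add_le_add_left h2 _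
    _ = n * (ℓ - 1) / 2 + (c * (∑ i ∈ range c₁, (ℓ - i)) + c₂ * (ℓ - c₁)) := by
          rw [hbase, ← hhalf, hmin]
    _ = n * (ℓ - 1) / 2 + c * (∑ i ∈ range c₁, (ℓ - i)) + c₂ * (ℓ - c₁) := by
          rw [add_assoc]
end

section
/- Let n = c·ℓ with c ≥ 1, ℓ ≥ 1, and let loc : {0,…,n−1} → {0,…,ℓ−1} be such that on each group of ℓ consecutive workers {gℓ,…,(g+1)ℓ−1} (0 ≤ g ≤ c−1) the function loc takes every value in {0,…,ℓ−1} exactly once. Let τ ≥ 1 with τ ≤ n, set c₁ = ⌊(τ−1)/c⌋, c₂ = (τ−1) − c·c₁, and Q_ub = n(ℓ−1)/2 + c·Σ_{i=0}^{c₁−1}(ℓ−i) + c₂·(ℓ−c₁) + 1. Then every computation profile t with Σ_{w=0}^{n−1} t(w) ≥ Q_ub satisfies A(t) ≥ τ, i.e., the class is processed by at least τ distinct workers. -/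
/-!
Suppose fewer than `τ` workers process the class and let `X` be the set of those that do.
A worker outside `X` has `t w ≤ loc w` and one in `X` has `t w ≤ ℓ`, so
`∑ t ≤ ∑_w loc w + ∑_{w ∈ X} (ℓ - loc w)`. The first sum is `c · ℓ(ℓ-1)/2` because `loc` permutes
every group. For the second, at most `c · b` workers have `loc < b`, so the `k`-th element of `X`
in increasing order of `loc` has `loc ≥ k / c`; hence the second sum is at most
`∑_{k < τ-1} (ℓ - k / c) = c · ∑_{i < c₁} (ℓ - i) + c₂ · (ℓ - c₁)`, and `∑ t < Q_ub`.
-/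

open Finset

theorem sum_range_mul_eq_sum_sum {M : Type*} [AddCommMonoid M] (f : ℕ → M) (a b : ℕ) :
    ∑ k ∈ range (a * b), f k = ∑ g ∈ range a, ∑ i ∈ range b, f (g * b + i) := by
  induction a with
  | zero => simp
  | succ a ih => rw [sum_range_succ, ← ih, Nat.succ_mul, sum_range_add]

theorem sum_le_sum_add_sum_filter_tsub {α : Type*} {s : Finset α} {t f : α → ℕ} {ℓ : ℕ}
    (ht : ∀ x ∈ s, t x ≤ ℓ) :
    ∑ x ∈ s, t x ≤ ∑ x ∈ s, f x + ∑ x ∈ s with f x < t x, (ℓ - f x) := by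
  rw [sum_filter, ← sum_add_distrib]
  refine sum_le_sum fun x hx => ?_
  have := ht x hx
  split_ifs <;> omega

/-- Layer-cake formula: `ℓ - f x` counts the levels `b < ℓ` with `f x ≤ b`. -/
theorem sum_tsub_eq_sum_card_filter {α : Type*} (s : Finset α) (f : α → ℕ) (ℓ : ℕ) :
    ∑ x ∈ s, (ℓ - f x) = ∑ b ∈ range ℓ, #{x ∈ s | f x < b + 1} := by
  have hlevels : ∀ x, ℓ - f x = #{b ∈ range ℓ | f x < b + 1} := fun x => by
    rw [show {b ∈ range ℓ | f x < b + 1} = Ico (f x) ℓ by ext; simp; omega, Nat.card_Ico]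
  simp_rw [hlevels, card_filter]
  exact sum_comm

theorem card_filter_range_div_lt {c : ℕ} (hc : 0 < c) (m b : ℕ) :
    #{k ∈ range m | k / c < b} = min m (c * b) := by
  rw [show {k ∈ range m | k / c < b} = range (min m (c * b)) by
    ext k; simp only [mem_filter, mem_range, Nat.div_lt_iff_lt_mul hc, Nat.mul_comm b c]; omega,
    card_range]

theorem sum_tsub_le_sum_range_tsub_div {α : Type*} {s : Finset α} {f : α → ℕ} {c : ℕ}
    (hc : 0 < c) (hf : ∀ b, #{x ∈ s | f x < b} ≤ c * b) (ℓ : ℕ) :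
    ∑ x ∈ s, (ℓ - f x) ≤ ∑ k ∈ range #s, (ℓ - k / c) := by
  rw [sum_tsub_eq_sum_card_filter, sum_tsub_eq_sum_card_filter]
  refine sum_le_sum fun b _ => ?_
  rw [card_filter_range_div_lt hc]
  exact le_min (card_filter_le _ _) (hf _)

theorem sum_range_tsub_div {c : ℕ} (hc : 0 < c) (m ℓ : ℕ) :
    ∑ k ∈ range m, (ℓ - k / c) = c * ∑ i ∈ range (m / c), (ℓ - i) + m % c * (ℓ - m / c) := by
  conv_lhs => rw [← Nat.div_add_mod m c, Nat.mul_comm c, sum_range_add, sum_range_mul_eq_sum_sum]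
  have hfull : ∀ g, ∀ i < c, (g * c + i) / c = g := fun g i hi => by
    rw [Nat.mul_comm, Nat.mul_add_div hc, Nat.div_eq_of_lt hi, add_zero]
  have hlast : ∀ i < m % c, (m / c * c + i) / c = m / c := fun i hi =>
    hfull _ i (hi.trans (Nat.mod_lt m hc))
  congr 1
  · rw [mul_sum]
    refine sum_congr rfl fun g _ => ?_
    rw [sum_congr rfl fun i hi => by rw [hfull g i (mem_range.1 hi)], sum_const, card_range,
      smul_eq_mul]
  · rw [sum_congr rfl fun i hi => by rw [hlast i (mem_range.1 hi)], sum_const, card_range,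
      smul_eq_mul]

theorem card_filter_lt_le_of_injOn {α : Type*} {s : Finset α} {f : α → ℕ}
    (hf : Set.InjOn f s) (b : ℕ) : #{x ∈ s | f x < b} ≤ b := by
  calc #{x ∈ s | f x < b} ≤ #(range b) :=
        card_le_card_of_injOn f (fun x hx => by simpa using (mem_filter.1 hx).2)
          (hf.mono (filter_subset _ s))
    _ = b := card_range b

section Groups

variable {c ℓ : ℕ} {loc : ℕ → ℕ} (hloc : ∀ w < c * ℓ, loc w < ℓ)
  (hgroup : ∀ g < c, ∀ v < ℓ, ∃! i, i < ℓ ∧ loc (g * ℓ + i) = v)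
include hloc hgroup

theorem bijOn_loc_group {g : ℕ} (hg : g < c) :
    Set.BijOn (fun i => loc (g * ℓ + i)) (range ℓ) (range ℓ) := by
  have hmaps : ∀ i < ℓ, loc (g * ℓ + i) < ℓ := fun i hi => hloc _ (by nlinarith)
  refine ⟨fun i hi => ?_, fun i hi j hj hij => ?_, fun v hv => ?_⟩
  · simpa using hmaps i (by simpa using hi)
  · simp only [coe_range, Set.mem_Iio] at hi hj
    exact (hgroup g hg _ (hmaps i hi)).unique ⟨hi, rfl⟩ ⟨hj, hij.symm⟩
  · obtain ⟨i, ⟨hi, hiv⟩, -⟩ := hgroup g hg v (by simpa using hv)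
    exact ⟨i, by simpa using hi, hiv⟩

theorem sum_loc_eq_mul_sum_range :
    ∑ w ∈ range (c * ℓ), loc w = c * ∑ v ∈ range ℓ, v := by
  rw [sum_range_mul_eq_sum_sum, sum_congr rfl fun g hg => ?_, sum_const, card_range, smul_eq_mul]
  have hbij := bijOn_loc_group hloc hgroup (mem_range.1 hg)
  exact sum_nbij _ hbij.mapsTo hbij.injOn hbij.surjOn fun _ _ => rfl

theorem card_filter_loc_lt_le (b : ℕ) : #{w ∈ range (c * ℓ) | loc w < b} ≤ c * b := by
  rw [card_filter, sum_range_mul_eq_sum_sum]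
  calc _ ≤ ∑ _g ∈ range c, b := sum_le_sum fun g hg => by
        rw [← card_filter]
        exact card_filter_lt_le_of_injOn (bijOn_loc_group hloc hgroup (mem_range.1 hg)).injOn b
    _ = c * b := by simp

end Groups

theorem stmt1_general (c ℓ n : ℕ) (hc : 1 ≤ c) (hn : n = c * ℓ)
    (loc : ℕ → ℕ) (hloc : ∀ w < n, loc w < ℓ)
    (hgroup : ∀ g < c, ∀ v < ℓ, ∃! i, i < ℓ ∧ loc (g * ℓ + i) = v)
    (τ : ℕ)
    (c₁ c₂ Qub : ℕ) (hc₁ : c₁ = (τ - 1) / c) (hc₂ : c₂ = (τ - 1) - c * c₁)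
    (hQub : Qub = n * (ℓ - 1) / 2 + c * ∑ i ∈ Finset.range c₁, (ℓ - i)
        + c₂ * (ℓ - c₁) + 1)
    (t : ℕ → ℕ) (ht : ∀ w < n, t w ≤ ℓ)
    (hsum : Qub ≤ ∑ w ∈ Finset.range n, t w) :
    τ ≤ ((Finset.range n).filter (fun w => loc w < t w)).card := by
  subst hn
  set X := {w ∈ range (c * ℓ) | loc w < t w}
  by_contra! hX
  have hX_loc : ∀ b, #{w ∈ X | loc w < b} ≤ c * b := fun b =>
    (card_le_card (filter_subset_filter _ (filter_subset _ _))).trans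
      (card_filter_loc_lt_le hloc hgroup b)
  have hsum_loc : ∑ w ∈ range (c * ℓ), loc w = c * ℓ * (ℓ - 1) / 2 := by
    rw [sum_loc_eq_mul_sum_range hloc hgroup, mul_assoc, ← sum_range_id_mul_two, ← mul_assoc,
      Nat.mul_div_cancel _ two_pos]
  have htotal : ∑ w ∈ range (c * ℓ), t w < Qub :=
    calc ∑ w ∈ range (c * ℓ), t w ≤ ∑ w ∈ range (c * ℓ), loc w + ∑ w ∈ X, (ℓ - loc w) :=
          sum_le_sum_add_sum_filter_tsub fun w hw => ht w (mem_range.1 hw)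
      _ ≤ c * ℓ * (ℓ - 1) / 2 + ∑ k ∈ range (τ - 1), (ℓ - k / c) :=
          add_le_add hsum_loc.le <| (sum_tsub_le_sum_range_tsub_div hc hX_loc ℓ).trans
            (sum_le_sum_of_subset (range_subset_range.2 (by omega)))
      _ < Qub := by
          rw [sum_range_tsub_div hc, hQub, hc₂, hc₁, ← Nat.mod_eq_sub_mul_div]
          omega
  omega

/-- Any computation profile whose total number of processed slots is at
least `Q_ub = n(ℓ-1)/2 + c·Σ_{i<c₁}(ℓ-i) + c₂·(ℓ-c₁) + 1` (with `c₁ = ⌊(τ-1)/c⌋`,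
`c₂ = (τ-1) - c·c₁`) processes the fixed class in at least `τ` distinct workers. -/
theorem stmt1 (c ℓ n : ℕ) (hc : 1 ≤ c) (hl : 1 ≤ ℓ) (hn : n = c * ℓ)
    (loc : ℕ → ℕ) (hloc : ∀ w < n, loc w < ℓ)
    (hgroup : ∀ g < c, ∀ v < ℓ, ∃! i, i < ℓ ∧ loc (g * ℓ + i) = v)
    (τ : ℕ) (hτ : 1 ≤ τ) (hτn : τ ≤ n)
    (c₁ c₂ Qub : ℕ) (hc₁ : c₁ = (τ - 1) / c) (hc₂ : c₂ = (τ - 1) - c * c₁)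
    (hQub : Qub = n * (ℓ - 1) / 2 + c * ∑ i ∈ Finset.range c₁, (ℓ - i)
        + c₂ * (ℓ - c₁) + 1)
    (t : ℕ → ℕ) (ht : ∀ w < n, t w ≤ ℓ)
    (hsum : Qub ≤ ∑ w ∈ Finset.range n, t w) :
    τ ≤ ((Finset.range n).filter (fun w => loc w < t w)).card :=
  stmt1_general c ℓ n hc hn loc hloc hgroup τ c₁ c₂ Qub hc₁ hc₂ hQub t ht hsum
end

section
/- Let k ≥ 1 and s ≥ 0 be integers, and set σ = k + s, ω = 1 + ⌈s/k⌉, and ζ = 1 + k − ⌈k/ω⌉. For j = 0,…,σ−1 define the cyclic interval I_j = {(j + r) mod k : 0 ≤ r < ζ} ⊆ ℤ/kℤ. Then for every subset T ⊆ {0,…,σ−1} with |T| = k there exists a bijection g : ℤ/kℤ → T such that i ∈ I_{g(i)} for every i ∈ ℤ/kℤ (a system of distinct representatives). -/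
/-- Lower bound for the size of a union of cyclic intervals of length `ζ` in `ZMod k`. -/
lemma interval_union_card {k : ℕ} (hk : 0 < k) (ζ : ℕ) (hζ1 : 1 ≤ ζ) (hζk : ζ ≤ k)
    (D : Finset (ZMod k)) (hD : D.Nonempty) :
    min k ((ζ - 1) + D.card) ≤
      (D.biUnion (fun d => (Finset.range ζ).image (fun r : ℕ => d + (r : ZMod k)))).card := by
  haveI : NeZero k := ⟨hk.ne'⟩
  set U := D.biUnion (fun d => (Finset.range ζ).image (fun r : ℕ => d + (r : ZMod k))) with hU
  by_cases hUuniv : U = Finset.univ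
  · rw [hUuniv, Finset.card_univ, ZMod.card]; exact min_le_left _ _
  obtain ⟨x, hx⟩ : ∃ x : ZMod k, x ∉ U := by
    by_contra h; push_neg at h; exact hUuniv (Finset.eq_univ_iff_forall.mpr h)
  set φ : ZMod k → ℕ := fun y => (y - x - 1).val with hφ
  have hφinj : Function.Injective φ := by
    intro a b hab
    have : a - x - 1 = b - x - 1 := ZMod.val_injective k hab
    have := congrArg (fun z => z + x + 1) this
    simpa [sub_add_cancel] using this
  -- key : intervals avoiding x don't wrap past x
  have key : ∀ d ∈ D, (d - x - 1).val + ζ ≤ k := by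
    intro d hd
    by_contra h
    push_neg at h
    set a := d - x - 1 with ha
    have hav : a.val < k := ZMod.val_lt a
    have hrlt : k - 1 - a.val < ζ := by omega
    apply hx
    rw [hU]
    refine Finset.mem_biUnion.mpr ⟨d, hd, Finset.mem_image.mpr ⟨k - 1 - a.val,
      Finset.mem_range.mpr hrlt, ?_⟩⟩
    have hcast : ((k - 1 - a.val : ℕ) : ZMod k) = -1 - a := by
      have e1 : k - 1 - a.val = k - (1 + a.val) := by omega
      rw [e1, Nat.cast_sub (by omega : 1 + a.val ≤ k), Nat.cast_add, Nat.cast_one,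
        ZMod.natCast_self, ZMod.natCast_val, ZMod.cast_id]
      ring
    rw [hcast, ha]; ring
  have hadd : ∀ d ∈ D, ∀ r : ℕ, r < ζ → φ (d + (r : ZMod k)) = φ d + r := by
    intro d hd r hr
    have h1 : d + (r : ZMod k) - x - 1 = (d - x - 1) + (r : ZMod k) := by ring
    have hrval : ((r : ZMod k)).val = r := ZMod.val_natCast_of_lt (lt_of_lt_of_le hr hζk)
    have h2 : (d - x - 1).val + ((r : ZMod k)).val < k := by
      have := key d hd; omega
    simp only [hφ, h1, ZMod.val_add_of_lt h2, hrval]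
  -- the linearized picture
  have hUcard : (U.image φ).card = U.card := Finset.card_image_of_injective U hφinj
  obtain ⟨d0, hd0D, hd0max⟩ := Finset.exists_max_image D φ hD
  set V1 := (Finset.range ζ).image (fun r => φ d0 + r) with hV1
  set V2 := (D.erase d0).image φ with hV2
  have hmemU : ∀ d ∈ D, ∀ r : ℕ, r < ζ → d + (r : ZMod k) ∈ U := by
    intro d hd r hr
    exact Finset.mem_biUnion.mpr ⟨d, hd, Finset.mem_image.mpr ⟨r, Finset.mem_range.mpr hr, rfl⟩⟩
  have hsub : V1 ∪ V2 ⊆ U.image φ := by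
    intro y hy
    rcases Finset.mem_union.mp hy with hy | hy
    · obtain ⟨r, hr, rfl⟩ := Finset.mem_image.mp hy
      rw [Finset.mem_range] at hr
      exact Finset.mem_image.mpr ⟨d0 + (r : ZMod k), hmemU d0 hd0D r hr,
        hadd d0 hd0D r hr⟩
    · obtain ⟨d, hd, rfl⟩ := Finset.mem_image.mp hy
      have hdD := Finset.mem_of_mem_erase hd
      refine Finset.mem_image.mpr ⟨d + ((0 : ℕ) : ZMod k), hmemU d hdD 0 hζ1, ?_⟩
      simp [hadd d hdD 0 hζ1]
  have hdisj : Disjoint V1 V2 := by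
    rw [Finset.disjoint_left]
    intro y hy1 hy2
    obtain ⟨r, hr, rfl⟩ := Finset.mem_image.mp hy1
    obtain ⟨d, hd, hdy⟩ := Finset.mem_image.mp hy2
    have hdD := Finset.mem_of_mem_erase hd
    have hne : d ≠ d0 := Finset.ne_of_mem_erase hd
    have : φ d < φ d0 ∨ φ d = φ d0 := lt_or_eq_of_le (hd0max d hdD)
    rcases this with h | h
    · omega
    · exact hne (hφinj h)
  have hV1card : V1.card = ζ := by
    rw [hV1, Finset.card_image_of_injective _ (add_right_injective _), Finset.card_range]
  have hV2card : V2.card = D.card - 1 := by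
    rw [hV2, Finset.card_image_of_injective _ hφinj, Finset.card_erase_of_mem hd0D]
  have h1 : ζ + (D.card - 1) ≤ U.card := by
    calc ζ + (D.card - 1) = (V1 ∪ V2).card := by
          rw [Finset.card_union_of_disjoint hdisj, hV1card, hV2card]
      _ ≤ (U.image φ).card := Finset.card_le_card hsub
      _ = U.card := hUcard
  have hDpos : 1 ≤ D.card := Finset.card_pos.mpr hD
  calc min k ((ζ - 1) + D.card) ≤ (ζ - 1) + D.card := min_le_right _ _
    _ = ζ + (D.card - 1) := by omega
    _ ≤ U.card := h1

/-- With `σ = k + s`, `ω = 1 + ⌈s/k⌉`, `ζ = 1 + k - ⌈k/ω⌉` and cyclic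
intervals `I j = {(j + r) mod k : 0 ≤ r < ζ}`, every `k`-element subset `T` of
`{0, …, σ-1}` admits a system of distinct representatives: a bijection
`g : ℤ/kℤ → T` with `i ∈ I (g i)` for every `i`. -/
theorem stmt2 (k s : ℕ) (hk : 1 ≤ k)
    (σ ω ζ : ℕ)
    (hσ : σ = k + s)
    (hω : ω = 1 + ⌈(s : ℚ) / (k : ℚ)⌉₊)
    (hζ : ζ = 1 + k - ⌈(k : ℚ) / (ω : ℚ)⌉₊)
    (I : ℕ → Finset (ZMod k))
    (hI : ∀ j, I j = (Finset.range ζ).image (fun r => ((j + r : ℕ) : ZMod k)))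
    (T : Finset ℕ) (hT : T ⊆ Finset.range σ) (hTcard : T.card = k) :
    ∃ g : ZMod k → {x // x ∈ T}, Function.Bijective g ∧
      ∀ i : ZMod k, i ∈ I (g i).val := by
  classical
  haveI : NeZero k := ⟨by omega⟩
  have hk0 : (0 : ℚ) < (k : ℚ) := by positivity
  set c := ⌈(k : ℚ) / (ω : ℚ)⌉₊ with hc
  have hω1 : 1 ≤ ω := by omega
  have hω0 : (0 : ℚ) < (ω : ℚ) := by exact_mod_cast hω1
  -- σ ≤ ω * k
  have hσω : σ ≤ ω * k := by
    have h1 : (s : ℚ) / (k : ℚ) ≤ (⌈(s : ℚ) / (k : ℚ)⌉₊ : ℚ) := Nat.le_ceil _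
    have h2 : (s : ℚ) ≤ (⌈(s : ℚ) / (k : ℚ)⌉₊ : ℚ) * k := by
      rw [div_le_iff₀ hk0] at h1; exact h1
    have h3 : s ≤ ⌈(s : ℚ) / (k : ℚ)⌉₊ * k := by exact_mod_cast h2
    rw [hσ, hω]; nlinarith
  -- 1 ≤ c ≤ k
  have hck : c ≤ k := by
    rw [hc, Nat.ceil_le, div_le_iff₀ hω0]
    have hω1' : (1 : ℚ) ≤ (ω : ℚ) := by exact_mod_cast hω1
    nlinarith
  have hc1 : 1 ≤ c := by
    rw [hc]
    have : (0 : ℚ) < (k : ℚ) / (ω : ℚ) := by positivity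
    exact Nat.one_le_iff_ne_zero.mpr (by positivity)
  -- ω * (c - 1) < k
  have hωc : ω * (c - 1) < k := by
    by_contra h
    push_neg at h
    have h1 : (k : ℚ) / (ω : ℚ) ≤ ((c - 1 : ℕ) : ℚ) := by
      rw [div_le_iff₀ hω0]
      have : (k : ℚ) ≤ ((ω * (c - 1) : ℕ) : ℚ) := by exact_mod_cast h
      push_cast at this ⊢
      linarith
    have : c ≤ c - 1 := by rw [hc]; exact Nat.ceil_le.mpr h1
    omega
  have hζ1 : ζ = (k - c) + 1 := by omega
  have hζpos : 1 ≤ ζ := by omega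
  have hζk : ζ ≤ k := by omega
  -- Hall's condition for t j = I j
  set t : {x // x ∈ T} → Finset (ZMod k) := fun j => I j.val with ht
  have hall : ∀ A : Finset {x // x ∈ T}, A.card ≤ (A.biUnion t).card := by
    intro A
    rcases A.eq_empty_or_nonempty with rfl | hA
    · simp
    set S := A.image (Subtype.val) with hS
    have hScard : S.card = A.card := Finset.card_image_of_injective _ Subtype.val_injective
    have hSσ : ∀ j ∈ S, j < σ := by
      intro j hj
      obtain ⟨a, _, rfl⟩ := Finset.mem_image.mp hj
      exact Finset.mem_range.mp (hT a.2)
    set D := S.image (fun j : ℕ => (j : ZMod k)) with hD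
    have hSne : S.Nonempty := hA.image _
    have hDne : D.Nonempty := by rw [hD]; exact hSne.image _
    -- Step 1: A.card ≤ ω * D.card
    have step1 : A.card ≤ ω * D.card := by
      have hfib : ∀ v : ZMod k,
          ((Finset.range σ).filter (fun j : ℕ => (j : ZMod k) = v)).card ≤ ω := by
        intro v
        have hsub : (Finset.range σ).filter (fun j : ℕ => (j : ZMod k) = v) ⊆
            (Finset.range ω).image (fun q => v.val + q * k) := by
          intro j hj
          obtain ⟨hjσ, hjv⟩ := Finset.mem_filter.mp hj
          rw [Finset.mem_range] at hjσ
          have hmod : j % k = v.val := by rw [← hjv, ZMod.val_natCast]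
          refine Finset.mem_image.mpr ⟨j / k, Finset.mem_range.mpr ?_, ?_⟩
          · have : j < ω * k := lt_of_lt_of_le hjσ hσω
            exact Nat.div_lt_of_lt_mul (by rwa [mul_comm] at this)
          · rw [← hmod, mul_comm]
            exact (Nat.mod_add_div j k).symm ▸ rfl
        calc ((Finset.range σ).filter (fun j : ℕ => (j : ZMod k) = v)).card
            ≤ ((Finset.range ω).image (fun q => v.val + q * k)).card :=
              Finset.card_le_card hsub
          _ ≤ ω := le_trans (Finset.card_image_le) (by rw [Finset.card_range])
      have hScover : S ⊆ D.biUnion (fun v => (Finset.range σ).filter (fun j : ℕ => (j : ZMod k) = v)) := by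
        intro j hj
        exact Finset.mem_biUnion.mpr ⟨(j : ZMod k), Finset.mem_image.mpr ⟨j, hj, rfl⟩,
          Finset.mem_filter.mpr ⟨Finset.mem_range.mpr (hSσ j hj), rfl⟩⟩
      calc A.card = S.card := hScard.symm
        _ ≤ (D.biUnion (fun v => (Finset.range σ).filter (fun j : ℕ => (j : ZMod k) = v))).card :=
            Finset.card_le_card hScover
        _ ≤ ∑ v ∈ D, ((Finset.range σ).filter (fun j : ℕ => (j : ZMod k) = v)).card :=
            Finset.card_biUnion_le
        _ ≤ ∑ _v ∈ D, ω := Finset.sum_le_sum (fun v _ => hfib v)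
        _ = D.card * ω := by rw [Finset.sum_const, smul_eq_mul]
        _ = ω * D.card := mul_comm _ _
    -- Step 2: the union contains the union of intervals over D
    have step2 : D.biUnion (fun d => (Finset.range ζ).image (fun r : ℕ => d + (r : ZMod k)))
        ⊆ A.biUnion t := by
      intro y hy
      obtain ⟨d, hd, hyI⟩ := Finset.mem_biUnion.mp hy
      obtain ⟨j, hjS, rfl⟩ := Finset.mem_image.mp hd
      obtain ⟨a, haA, rfl⟩ := Finset.mem_image.mp hjS
      refine Finset.mem_biUnion.mpr ⟨a, haA, ?_⟩
      show y ∈ I a.val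
      rw [hI]
      obtain ⟨r, hr, rfl⟩ := Finset.mem_image.mp hyI
      exact Finset.mem_image.mpr ⟨r, hr, by push_cast; ring⟩
    have step2' : min k ((ζ - 1) + D.card) ≤ (A.biUnion t).card :=
      le_trans (interval_union_card (by omega) ζ hζpos hζk D hDne)
        (Finset.card_le_card step2)
    -- Step 3: arithmetic
    have hAk : A.card ≤ k := by
      have hST : S ⊆ T := by
        rw [hS]; exact Finset.image_subset_iff.mpr (fun a _ => a.2)
      have := Finset.card_le_card hST
      omega
    have harith : A.card ≤ min k ((ζ - 1) + D.card) := by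
      rw [le_min_iff]
      refine ⟨hAk, ?_⟩
      have hζ2 : ζ - 1 = k - c := by omega
      rw [hζ2]
      by_cases hdc : c ≤ D.card
      · omega
      · have hd1 : D.card ≤ c - 1 := by omega
        have e1 : ω * D.card + ω * (c - 1 - D.card) = ω * (c - 1) := by
          rw [← Nat.mul_add]; congr 1; omega
        have e2 : c - 1 - D.card ≤ ω * (c - 1 - D.card) := Nat.le_mul_of_pos_left _ (by omega)
        omega
    exact le_trans harith step2'
  obtain ⟨f, hfinj, hfmem⟩ := (Finset.all_card_le_biUnion_card_iff_exists_injective t).mp hall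
  have hcards : Fintype.card {x // x ∈ T} = Fintype.card (ZMod k) := by
    rw [Fintype.card_coe, hTcard, ZMod.card]
  have hfbij : Function.Bijective f :=
    (Fintype.bijective_iff_injective_and_card f).mpr ⟨hfinj, hcards⟩
  set e := Equiv.ofBijective f hfbij with he
  refine ⟨e.symm, e.symm.bijective, fun i => ?_⟩
  have h1 : f (e.symm i) = i := e.apply_symm_apply i
  have h2 := hfmem (e.symm i)
  rw [h1] at h2
  simpa [ht] using h2
end

section
/- Let k ≥ 1, 1 ≤ ζ ≤ k, ω ≥ 1, and let s_1,…,s_m ∈ ℤ/kℤ (m ≥ 1) be starting points such that each value of ℤ/kℤ occurs at most ω times among s_1,…,s_m. Then the union of the cyclic intervals of length ζ starting at s_1,…,s_m satisfies |⋃_{j=1}^{m} I_{s_j}| ≥ min(ζ + ⌈m/ω⌉ − 1, k). -/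
lemma aux_stmt4 (k ζ : ℕ) [NeZero k] (hζ1 : 1 ≤ ζ) (hζk : ζ ≤ k)
    (T : Finset (ZMod k)) (hT : T.Nonempty)
    (I : ZMod k → Finset (ZMod k))
    (hI : ∀ a, I a = (Finset.range ζ).image (fun (r : ℕ) => a + (r : ZMod k))) :
    min (ζ + T.card - 1) k ≤ (T.biUnion I).card := by
  classical
  set U := T.biUnion I with hUdef
  have hmem : ∀ a ∈ T, ∀ r : ℕ, r < ζ → a + (r : ZMod k) ∈ U := by
    intro a ha r hr
    exact Finset.mem_biUnion.mpr ⟨a, ha, by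
      rw [hI]; exact Finset.mem_image.mpr ⟨r, Finset.mem_range.mpr hr, rfl⟩⟩
  have hTU : T ⊆ U := by
    intro a ha
    have := hmem a ha 0 (by omega)
    simpa using this
  by_cases hUuniv : U = Finset.univ
  · rw [hUuniv, Finset.card_univ, ZMod.card]
    exact min_le_right _ _
  · obtain ⟨x, hx⟩ : ∃ x, x ∉ U := by
      by_contra h; push_neg at h
      exact hUuniv (Finset.eq_univ_iff_forall.mpr h)
    set v : ZMod k → ℕ := fun y => (y - x).val with hv
    have hbound : ∀ a ∈ T, v a + ζ ≤ k := by
      intro a ha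
      by_contra h
      push_neg at h
      have hvk : v a < k := ZMod.val_lt _
      have hr : k - v a < ζ := by omega
      have hcast : ((k - v a : ℕ) : ZMod k) = x - a := by
        have hle : v a ≤ k := le_of_lt hvk
        push_cast [Nat.cast_sub hle]
        simp only [hv, ZMod.natCast_val, ZMod.cast_id, ZMod.natCast_self]
        ring
      have heq : a + ((k - v a : ℕ) : ZMod k) = x := by rw [hcast]; ring
      exact hx (heq ▸ hmem a ha (k - v a) hr)
    obtain ⟨a₀, ha₀T, ha₀max⟩ := T.exists_max_image v hT
    have hkey : ∀ a ∈ T, a ∈ I a₀ → a = a₀ := by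
      intro a ha hai
      rw [hI] at hai
      obtain ⟨r, hr, rfl⟩ := Finset.mem_image.mp hai
      rw [Finset.mem_range] at hr
      have hrk : r < k := lt_of_lt_of_le hr hζk
      have hval : v (a₀ + (r : ZMod k)) = v a₀ + r := by
        have h1 : a₀ + (r : ZMod k) - x = (a₀ - x) + (r : ZMod k) := by ring
        have h2 : (a₀ - x).val + ((r : ℕ) : ZMod k).val < k := by
          rw [ZMod.val_cast_of_lt hrk]
          have := hbound a₀ ha₀T
          have hvv : v a₀ = (a₀ - x).val := rfl
          omega
        show (a₀ + (r : ZMod k) - x).val = (a₀ - x).val + r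
        rw [h1, ZMod.val_add_of_lt h2, ZMod.val_cast_of_lt hrk]
      have hle : v (a₀ + (r : ZMod k)) ≤ v a₀ := ha₀max _ ha
      rw [hval] at hle
      have : r = 0 := by omega
      subst this
      simp
    have hIcard : (I a₀).card = ζ := by
      rw [hI, Finset.card_image_of_injOn, Finset.card_range]
      intro r₁ h₁ r₂ h₂ hh
      rw [Finset.mem_coe, Finset.mem_range] at h₁ h₂
      have : ((r₁ : ℕ) : ZMod k) = ((r₂ : ℕ) : ZMod k) := by
        exact add_left_cancel hh
      have := congrArg ZMod.val this
      rwa [ZMod.val_cast_of_lt (lt_of_lt_of_le h₁ hζk),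
        ZMod.val_cast_of_lt (lt_of_lt_of_le h₂ hζk)] at this
    have hsub : I a₀ ∪ (T \ I a₀) ⊆ U := by
      intro y hy
      rcases Finset.mem_union.mp hy with hy | hy
      · rw [hI] at hy
        obtain ⟨r, hr, rfl⟩ := Finset.mem_image.mp hy
        exact hmem a₀ ha₀T r (Finset.mem_range.mp hr)
      · exact hTU (Finset.mem_sdiff.mp hy).1
    have hTminus : T.card - 1 ≤ (T \ I a₀).card := by
      have hsub2 : T \ {a₀} ⊆ T \ I a₀ := by
        intro a ha
        rw [Finset.mem_sdiff] at ha ⊢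
        refine ⟨ha.1, fun hc => ?_⟩
        exact ha.2 (Finset.mem_singleton.mpr (hkey a ha.1 hc))
      calc T.card - 1 = (T \ {a₀}).card := by
            rw [Finset.card_sdiff_of_subset (by simpa using ha₀T)]; simp
        _ ≤ _ := Finset.card_le_card hsub2
    have hcardU : ζ + (T \ I a₀).card ≤ U.card := by
      have := Finset.card_le_card hsub
      rwa [Finset.card_union_of_disjoint (Finset.disjoint_sdiff), hIcard] at this
    have hT1 : 1 ≤ T.card := Finset.card_pos.mpr hT
    have : ζ + T.card - 1 ≤ U.card := by omega
    exact le_trans (min_le_left _ _) this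

/-- For cyclic intervals `I s` of length `1 ≤ ζ ≤ k` in `ℤ/kℤ` and
starting points `s 1, …, s m` in which every value occurs at most `ω` times, the
union of the intervals has at least `min (ζ + ⌈m/ω⌉ - 1) k` elements. -/
theorem stmt4 (k ζ ω m : ℕ) (hk : 1 ≤ k) (hζ1 : 1 ≤ ζ) (hζk : ζ ≤ k)
    (hω : 1 ≤ ω) (hm : 1 ≤ m)
    (s : Fin m → ZMod k)
    (hmult : ∀ v : ZMod k,
      ((Finset.univ : Finset (Fin m)).filter (fun j => s j = v)).card ≤ ω)
    (I : ZMod k → Finset (ZMod k))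
    (hI : ∀ a, I a = (Finset.range ζ).image (fun (r : ℕ) => a + (r : ZMod k))) :
    min (ζ + ⌈(m : ℚ) / (ω : ℚ)⌉₊ - 1) k
      ≤ ((Finset.univ : Finset (Fin m)).biUnion (fun j => I (s j))).card := by
  classical
  haveI : NeZero k := ⟨by omega⟩
  set T := (Finset.univ : Finset (Fin m)).image s with hT
  have hTne : T.Nonempty := by
    refine ⟨s ⟨0, by omega⟩, Finset.mem_image.mpr ⟨⟨0, by omega⟩, Finset.mem_univ _, rfl⟩⟩
  have hEq : (Finset.univ : Finset (Fin m)).biUnion (fun j => I (s j)) = T.biUnion I := by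
    rw [hT, Finset.image_biUnion]
  have hmd : m ≤ ω * T.card := by
    have := Finset.card_eq_sum_card_image s (Finset.univ : Finset (Fin m))
    rw [Finset.card_univ, Fintype.card_fin] at this
    calc m = ∑ a ∈ T, ((Finset.univ : Finset (Fin m)).filter (fun j => s j = a)).card := this
      _ ≤ ∑ _a ∈ T, ω := Finset.sum_le_sum fun a _ => hmult a
      _ = ω * T.card := by rw [Finset.sum_const, smul_eq_mul, mul_comm]
  have hceil : ⌈(m : ℚ) / (ω : ℚ)⌉₊ ≤ T.card := by
    rw [Nat.ceil_le, div_le_iff₀ (by positivity)]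
    calc (m : ℚ) ≤ (ω * T.card : ℕ) := by exact_mod_cast hmd
      _ = (T.card : ℚ) * ω := by push_cast; ring
  rw [hEq]
  refine le_trans ?_ (aux_stmt4 k ζ hζ1 hζk T hTne I hI)
  omega
end

section
/- Let n ≥ 1, w̄ ≥ 1, and k_B with 1 ≤ k_B ≤ n, and set Δ_A = n·w̄ and p = k_B·w̄. Then for every i with 0 ≤ i < Δ_A, the number of workers j ∈ {0,…,n−1} such that (i − j·w̄) mod Δ_A < p equals exactly k_B. -/
private lemma stmt7_inv (n q : ℕ) (hn : 1 ≤ n) : ∀ x < n, (q + n - (q + n - x) % n) % n = x := by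
  intro x hx
  have hd := Nat.div_add_mod (q + n - x) n
  have hs : (q + n - x) % n < n := Nat.mod_lt _ (by omega)
  have he : q + n - (q + n - x) % n = x + n * ((q + n - x) / n) := by omega
  rw [he, Nat.add_mul_mod_self_left, Nat.mod_eq_of_lt hx]

/-- With `Δ_A = n·w̄` and `p = k_B·w̄`, every block-column index
`i < Δ_A` appears uncoded in exactly `k_B` workers, i.e. the number of
`j ∈ {0,…,n-1}` with `(i - j·w̄) mod Δ_A < p` equals `k_B`. -/
theorem stmt7 (n w kB : ℕ) (hn : 1 ≤ n) (hw : 1 ≤ w) (hkB1 : 1 ≤ kB) (hkBn : kB ≤ n)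
    (ΔA p : ℕ) (hΔ : ΔA = n * w) (hp : p = kB * w)
    (i : ℕ) (hi : i < ΔA) :
    ((Finset.range n).filter
      (fun (j : ℕ) => ((i : ℤ) - (j : ℤ) * (w : ℤ)) % (ΔA : ℤ) < (p : ℤ))).card = kB := by
  subst hΔ hp
  obtain ⟨q, r, hrw, hiw⟩ : ∃ q r, r < w ∧ i = q * w + r :=
    ⟨i / w, i % w, Nat.mod_lt _ (by omega), (Nat.div_add_mod' i w).symm⟩
  have hqn : q < n := by
    by_contra h
    push_neg at h
    have : n * w ≤ q * w := Nat.mul_le_mul_right _ h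
    omega
  -- key equivalence
  have key : ∀ j < n, (((i : ℤ) - (j : ℤ) * (w : ℤ)) % ((n*w : ℕ) : ℤ) < ((kB*w : ℕ) : ℤ))
      ↔ (q + n - j) % n < kB := by
    intro j hj
    set a : ℕ := (q + n - j) % n with ha
    have han : a < n := Nat.mod_lt _ (by omega)
    have hmod : ((q : ℤ) - j) % n = (a : ℤ) := by
      have h1 : ((q : ℤ) - j) % n = ((q : ℤ) + n - j) % n := by
        rw [show (q : ℤ) + n - j = (q - j) + 1 * n by ring, Int.add_mul_emod_self_right]
      rw [h1]
      have h2 : ((q : ℤ) + n - j) = ((q + n - j : ℕ) : ℤ) := by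
        rw [Nat.cast_sub (by omega)]; push_cast; ring
      rw [h2, ha, Int.natCast_mod]
    have hexp : ((i : ℤ) - j * w) % ((n*w : ℕ) : ℤ) = (a : ℤ) * w + r := by
      have h3 : (i : ℤ) - j * w = ((q : ℤ) - j) * w + r := by
        rw [hiw]; push_cast; ring
      rw [h3]
      have hd := Int.mul_ediv_add_emod ((q : ℤ) - j) n
      have h4 : ((q : ℤ) - j) * w + r = ((a : ℤ) * w + r) + (((q:ℤ)-j)/n) * ((n*w : ℕ) : ℤ) := by
        push_cast
        nlinarith [hd, hmod]
      rw [h4, Int.add_mul_emod_self_right]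
      refine Int.emod_eq_of_lt (by positivity) ?_
      push_cast
      nlinarith [han, hrw]
    rw [hexp]
    constructor
    · intro h
      by_contra hc
      push_neg at hc
      have h5 : (kB : ℤ) * w ≤ a * w := by
        have h6 : (kB : ℤ) ≤ a := by exact_mod_cast hc
        nlinarith
      push_cast at h
      omega
    · intro h
      have h1 : (a : ℤ) + 1 ≤ kB := by exact_mod_cast h
      push_cast
      nlinarith [hrw]
  refine (Finset.card_bij' (fun j _ => (q + n - j) % n) (fun t _ => (q + n - t) % n)
    ?_ ?_ ?_ ?_).trans (Finset.card_range kB)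
  · intro j hj
    simp only [Finset.mem_filter, Finset.mem_range] at hj ⊢
    exact (key j hj.1).mp hj.2
  · intro t ht
    rw [Finset.mem_range] at ht
    have htn := lt_of_lt_of_le ht hkBn
    simp only [Finset.mem_filter, Finset.mem_range]
    have hm : (q + n - t) % n < n := Nat.mod_lt _ (by omega)
    refine ⟨hm, (key _ hm).mpr ?_⟩
    rw [stmt7_inv n q hn t htn]; exact ht
  · intro j hj
    simp only [Finset.mem_filter, Finset.mem_range] at hj
    exact stmt7_inv n q hn j hj.1
  · intro t ht
    rw [Finset.mem_range] at ht
    exact stmt7_inv n q hn t (lt_of_lt_of_le ht hkBn)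
end

section
/- Let k ≥ 1, 1 ≤ w ≤ k, and N ≥ 0. For t = 0,…,N−1 define the window W_t = {(t·w + r) mod k : 0 ≤ r < w} ⊆ ℤ/kℤ, and for i ∈ ℤ/kℤ let f(i) = |{t ∈ {0,…,N−1} : i ∈ W_t}|. Then f(i) ∈ {⌊N·w/k⌋, ⌈N·w/k⌉} for every i, and consequently |f(i) − f(j)| ≤ 1 for all i, j ∈ ℤ/kℤ. -/
/-! Window `t` consists of the residues of `t * w, …, t * w + w - 1`, so the first `N` windows
are the residues of `0, …, N * w - 1` cut into consecutive blocks. Since `w ≤ k`, a window meets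
each residue class at most once, hence `f i` is the number of `n < N * w` with `n ≡ i [MOD k]`,
which is `⌊N * w / k⌋` or `⌈N * w / k⌉`. -/

open Finset

theorem Nat.ceil_natCast_div_eq_div_add_one {K : Type*} [Semifield K] [LinearOrder K]
    [IsStrictOrderedRing K] [FloorSemiring K] {m n : ℕ} (hn : 0 < n) (h : ¬ n ∣ m) :
    ⌈(m : K) / n⌉₊ = m / n + 1 := by
  refine le_antisymm ?_ (Nat.add_one_le_iff.mpr (Nat.lt_ceil.mpr ?_))
  · simpa only [Nat.floor_div_eq_div] using Nat.ceil_le_floor_add_one ((m : K) / n)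
  · rw [lt_div_iff₀ (by exact_mod_cast hn)]
    exact_mod_cast lt_of_le_of_ne (Nat.div_mul_le_self m n)
      fun he => h (he ▸ dvd_mul_left n (m / n))

theorem Nat.count_modEq_eq_floor_or_eq_ceil {K : Type*} [Semifield K] [LinearOrder K]
    [IsStrictOrderedRing K] [FloorSemiring K] {k : ℕ} (hk : 0 < k) (M v : ℕ) :
    M.count (· ≡ v [MOD k]) = ⌊(M : K) / k⌋₊ ∨ M.count (· ≡ v [MOD k]) = ⌈(M : K) / k⌉₊ := by
  rw [Nat.count_modEq_card _ hk]
  split_ifs with h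
  · right
    rw [Nat.ceil_natCast_div_eq_div_add_one hk fun hd => by omega]
  · left
    rw [Nat.floor_div_eq_div, add_zero]

theorem Nat.abs_sub_le_one_of_eq_floor_or_eq_ceil {K : Type*} [Semifield K] [LinearOrder K]
    [IsStrictOrderedRing K] [FloorSemiring K] {a : K} {m n : ℕ}
    (hm : m = ⌊a⌋₊ ∨ m = ⌈a⌉₊) (hn : n = ⌊a⌋₊ ∨ n = ⌈a⌉₊) : |(m : ℤ) - n| ≤ 1 := by
  have := Nat.floor_le_ceil a
  have := Nat.ceil_le_floor_add_one a
  rw [abs_le]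
  rcases hm with rfl | rfl <;> rcases hn with rfl | rfl <;> omega

theorem eq_of_div_eq_of_natCast_eq {k w m n : ℕ} (hw : 0 < w) (hwk : w ≤ k)
    (hdiv : m / w = n / w) (hcast : (m : ZMod k) = n) : m = n := by
  have hlt (a : ℕ) : a % w < k := (Nat.mod_lt a hw).trans_le hwk
  have hmod : m % w = n % w := by
    have h : ((m / w * w + m % w : ℕ) : ZMod k) = ((n / w * w + n % w : ℕ) : ZMod k) := by
      rwa [Nat.div_add_mod', Nat.div_add_mod']
    rwa [hdiv, Nat.cast_add, Nat.cast_add, add_right_inj, ZMod.natCast_eq_natCast_iff',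
      Nat.mod_eq_of_lt (hlt m), Nat.mod_eq_of_lt (hlt n)] at h
  rw [← Nat.div_add_mod' m w, ← Nat.div_add_mod' n w, hdiv, hmod]

theorem card_filter_mem_window_eq_card_filter_natCast_eq {k w : ℕ} (hw : 0 < w) (hwk : w ≤ k)
    (N : ℕ) (i : ZMod k) :
    #{t ∈ range N | i ∈ (range w).image (fun r => ((t * w + r : ℕ) : ZMod k))} =
      #{n ∈ range (N * w) | ((n : ℕ) : ZMod k) = i} := by
  symm
  apply card_nbij (· / w)
  · intro n hn
    simp only [coe_filter, mem_range, Set.mem_ofPred_eq, mem_image] at hn ⊢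
    exact ⟨(Nat.div_lt_iff_lt_mul hw).mpr hn.1, n % w, Nat.mod_lt n hw, by
      rw [Nat.div_add_mod', hn.2]⟩
  · intro m hm n hn hdiv
    simp only [coe_filter, mem_range, Set.mem_ofPred_eq] at hm hn
    exact eq_of_div_eq_of_natCast_eq hw hwk hdiv (hm.2.trans hn.2.symm)
  · intro t ht
    simp only [coe_filter, mem_range, Set.mem_ofPred_eq, mem_image] at ht
    obtain ⟨htN, r, hr, rfl⟩ := ht
    refine ⟨t * w + r, ?_, ?_⟩
    · simp only [coe_filter, mem_range, Set.mem_ofPred_eq, and_true]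
      calc t * w + r < (t + 1) * w := by rw [add_one_mul]; omega
        _ ≤ N * w := Nat.mul_le_mul_right w htN
    · change (t * w + r) / w = t
      rw [Nat.mul_comm, Nat.mul_add_div hw, Nat.div_eq_of_lt hr, add_zero]

theorem card_filter_natCast_eq_eq_count {k : ℕ} [NeZero k] (M : ℕ) (i : ZMod k) :
    #{n ∈ range M | ((n : ℕ) : ZMod k) = i} = M.count (· ≡ i.val [MOD k]) := by
  rw [Nat.count_eq_card_filter_range]
  congr! 2 with n
  rw [← ZMod.natCast_eq_natCast_iff, ZMod.natCast_zmod_val]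

/-- Repeatedly taking windows of `w` cyclically consecutive elements
of `ℤ/kℤ` (the `t`-th window starting at `t·w mod k`), every element is covered
either `⌊N·w/k⌋` or `⌈N·w/k⌉` times among the first `N` windows; hence any two
coverage counts differ by at most one. -/
theorem stmt10 (k w N : ℕ) (hk : 1 ≤ k) (hw1 : 1 ≤ w) (hwk : w ≤ k)
    (W : ℕ → Finset (ZMod k))
    (hW : ∀ t, W t = (Finset.range w).image (fun r => ((t * w + r : ℕ) : ZMod k)))
    (f : ZMod k → ℕ)
    (hf : ∀ i, f i = ((Finset.range N).filter (fun t => i ∈ W t)).card) :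
    (∀ i, f i = ⌊(N * w : ℚ) / (k : ℚ)⌋₊ ∨ f i = ⌈(N * w : ℚ) / (k : ℚ)⌉₊) ∧
    ∀ i j, |(f i : ℤ) - (f j : ℤ)| ≤ 1 := by
  have : NeZero k := ⟨by omega⟩
  have hfloor_or_ceil (i : ZMod k) :
      f i = ⌊(N * w : ℚ) / (k : ℚ)⌋₊ ∨ f i = ⌈(N * w : ℚ) / (k : ℚ)⌉₊ := by
    simp only [hf, hW, card_filter_mem_window_eq_card_filter_natCast_eq hw1 hwk,
      card_filter_natCast_eq_eq_count, ← Nat.cast_mul]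
    exact Nat.count_modEq_eq_floor_or_eq_ceil (K := ℚ) hk _ _
  exact ⟨hfloor_or_ceil, fun i j =>
    Nat.abs_sub_le_one_of_eq_floor_or_eq_ceil (hfloor_or_ceil i) (hfloor_or_ceil j)⟩
end

section
/- Let n ≥ 1, w̄ ≥ 1, k_A ≥ 1, k_B ≥ 1, ℓ ≥ 1 with Δ_A = n·w̄ = k_A·ℓ, p = k_B·w̄, and k_A·k_B ≤ n. For 0 ≤ i < Δ_A let U_i = {j ∈ {0,…,n−1} : (i − j·w̄) mod Δ_A < p}. Then for any distinct i₁, i₂ ∈ {0,…,Δ_A−1} with i₁ ≡ i₂ (mod ℓ) one has U_{i₁} ∩ U_{i₂} = ∅; consequently, for every m with 0 ≤ m < ℓ, |⋃_{t=0}^{k_A−1} U_{m+tℓ}| = k_A·k_B. -/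
open Finset

/-!
Since `ℓ ∣ Δ_A` and `p ≤ ℓ` (from `k_A·p = k_A·k_B·w̄ ≤ n·w̄ = k_A·ℓ`), a residue mod `Δ_A` lying
below `p` is also the residue mod `ℓ`; so if a worker `j` held both `A_{i₁}` and `A_{i₂}` with
`i₁ ≡ i₂ (mod ℓ)`, the residues of `i₁ - j·w̄` and `i₂ - j·w̄` mod `Δ_A` would coincide, forcing
`i₁ = i₂`. For the count, write `i = q·w̄ + s` with `s < w̄`: then `(i - j·w̄) mod n·w̄` equals
`((q - j) mod n)·w̄ + s`, which is below `k_B·w̄` iff `(q - j) mod n < k_B`, and `j ↦ (q - j) mod n`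
permutes `{0, …, n-1}`. Hence every `U_i` has `k_B` elements and a class is a disjoint union of
`k_A` of them.
-/

namespace Int

theorem emod_eq_emod_of_dvd_of_emod_lt {a ℓ M : ℤ} (hM : M ≠ 0) (hℓM : ℓ ∣ M) (ha : a % M < ℓ) :
    a % M = a % ℓ := by
  rw [← emod_emod_of_dvd a hℓM, emod_eq_of_lt (emod_nonneg a hM) ha]

theorem mul_add_sub_mul_emod_mul {n w s : ℤ} (hn : 0 < n) (hs : 0 ≤ s) (hsw : s < w) (q j : ℤ) :
    (q * w + s - j * w) % (n * w) = (q - j) % n * w + s := by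
  have hr := emod_nonneg (q - j) hn.ne'
  have hrn := emod_lt_of_pos (q - j) hn
  have hdecomp : q * w + s - j * w = (q - j) % n * w + s + n * w * ((q - j) / n) := by
    linear_combination w * (mul_ediv_add_emod (q - j) n).symm
  rw [hdecomp, add_mul_emod_self_left, emod_eq_of_lt (by nlinarith) (by nlinarith)]

theorem mul_add_lt_mul_iff {w s : ℤ} (hs : 0 ≤ s) (hsw : s < w) (r k : ℤ) :
    r * w + s < k * w ↔ r < k := by
  constructor
  · intro h
    by_contra! hkr
    nlinarith
  · intro h
    nlinarith

end Int

theorem card_filter_range_sub_emod (P : ℤ → Prop) [DecidablePred P] (q : ℤ) (n : ℕ) :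
    ((range n).filter fun j : ℕ => P ((q - j) % n)).card =
      ((range n).filter fun j : ℕ => P j).card := by
  -- `σ j = (q - j) mod n` is an involution of `range n`.
  set σ : ℕ → ℕ := fun j => ((q - j) % n).toNat
  have hσ_cast : ∀ j < n, (σ j : ℤ) = (q - j) % n := fun j hj =>
    Int.toNat_of_nonneg (Int.emod_nonneg _ (by omega))
  have hσ_lt : ∀ j < n, σ j < n := fun j hj => by
    have := Int.emod_lt_of_pos (q - j) (by omega : (0 : ℤ) < n)
    rw [← hσ_cast j hj] at this
    omega
  have hσ_inv : ∀ j < n, (q - σ j) % n = j := fun j hj => by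
    rw [hσ_cast j hj, Int.sub_emod, Int.emod_emod, ← Int.sub_emod, sub_sub_cancel,
      Int.emod_eq_of_lt (by omega) (by omega)]
  refine card_nbij' σ σ ?_ ?_ ?_ ?_
  all_goals
    intro j hj
    simp only [coe_filter, mem_range, Set.mem_ofPred_eq] at hj ⊢
  · exact ⟨hσ_lt j hj.1, hσ_cast j hj.1 ▸ hj.2⟩
  · exact ⟨hσ_lt j hj.1, (hσ_inv j hj.1).symm ▸ hj.2⟩
  all_goals exact_mod_cast (hσ_cast _ (hσ_lt j hj.1)).trans (hσ_inv j hj.1)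

/-- Worker `j` stores `A_i` uncoded iff `i ≡ j·w + r (mod Δ)` for some `r < p`. -/
def uncodedWorkers (n w Δ p i : ℕ) : Finset ℕ :=
  (range n).filter fun j : ℕ => ((i : ℤ) - j * w) % Δ < p

theorem card_uncodedWorkers {n w k : ℕ} (hw : 0 < w) (hk : k ≤ n) (i : ℕ) :
    (uncodedWorkers n w (n * w) (k * w) i).card = k := by
  obtain ⟨q, s, hi, hs, hsw⟩ : ∃ q s : ℤ, (i : ℤ) = q * w + s ∧ 0 ≤ s ∧ s < w :=
    ⟨i / w, i % w, by rw [Int.ediv_mul_add_emod], Int.emod_nonneg _ (by omega),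
      Int.emod_lt_of_pos _ (by omega)⟩
  have hcond : ∀ j ∈ range n, ((i : ℤ) - j * w) % ((n * w : ℕ) : ℤ) < ((k * w : ℕ) : ℤ) ↔
      (q - j) % n < k := fun j hj => by
    push_cast
    rw [hi, Int.mul_add_sub_mul_emod_mul (by rw [mem_range] at hj; omega) hs hsw,
      Int.mul_add_lt_mul_iff hs hsw]
  have hrange : (range n).filter (fun j : ℕ => (j : ℤ) < k) = range k := by
    ext j
    simp only [mem_filter, mem_range]
    omega
  rw [uncodedWorkers, filter_congr hcond, card_filter_range_sub_emod (· < (k : ℤ)), hrange,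
    card_range]

theorem disjoint_uncodedWorkers {n w Δ p ℓ i₁ i₂ : ℕ} (hℓΔ : ℓ ∣ Δ) (hpℓ : p ≤ ℓ)
    (h₁ : i₁ < Δ) (h₂ : i₂ < Δ) (hne : i₁ ≠ i₂) (hmod : i₁ % ℓ = i₂ % ℓ) :
    Disjoint (uncodedWorkers n w Δ p i₁) (uncodedWorkers n w Δ p i₂) := by
  rw [disjoint_left]
  intro j hj₁ hj₂
  simp only [uncodedWorkers, mem_filter] at hj₁ hj₂
  have hΔ : (Δ : ℤ) ≠ 0 := by omega
  have hℓΔ' : (ℓ : ℤ) ∣ Δ := Int.natCast_dvd_natCast.mpr hℓΔ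
  have hpℓ' : (p : ℤ) ≤ ℓ := by exact_mod_cast hpℓ
  have key : (i₁ : ℤ) - j * w ≡ i₂ - j * w [ZMOD Δ] :=
    calc ((i₁ : ℤ) - j * w) % Δ = (i₁ - j * w) % ℓ :=
          Int.emod_eq_emod_of_dvd_of_emod_lt hΔ hℓΔ' (hj₁.2.trans_le hpℓ')
      _ = (i₂ - j * w) % ℓ := (Int.natCast_modEq_iff.mpr hmod).sub_right _
      _ = (i₂ - j * w) % Δ :=
          (Int.emod_eq_emod_of_dvd_of_emod_lt hΔ hℓΔ' (hj₂.2.trans_le hpℓ')).symm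
  have hi : i₁ ≡ i₂ [MOD Δ] := Int.natCast_modEq_iff.mp (by simpa using key.add_right (j * w))
  exact hne (hi.eq_of_lt_of_lt h₁ h₂)

theorem pairwiseDisjoint_uncodedWorkers_class {n w Δ p ℓ kA m : ℕ} (hΔ : Δ = kA * ℓ)
    (hpℓ : p ≤ ℓ) (hm : m < ℓ) :
    (range kA : Set ℕ).PairwiseDisjoint fun t => uncodedWorkers n w Δ p (m + t * ℓ) := by
  have hlt : ∀ t ∈ (range kA : Set ℕ), m + t * ℓ < Δ := fun t ht => by
    rw [coe_range, Set.mem_Iio] at ht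
    subst hΔ
    nlinarith
  intro t₁ ht₁ t₂ ht₂ hne
  refine disjoint_uncodedWorkers (hΔ ▸ dvd_mul_left ℓ kA) hpℓ (hlt t₁ ht₁) (hlt t₂ ht₂) ?_ ?_
  · exact fun h => hne (Nat.eq_of_mul_eq_mul_right (by omega) (Nat.add_left_cancel h))
  · rw [Nat.add_mul_mod_self_right, Nat.add_mul_mod_self_right]

theorem stmt11_general (n w kA kB ℓ ΔA p : ℕ)
    (hw : 1 ≤ w) (hkA : 1 ≤ kA)
    (hΔ1 : ΔA = n * w) (hΔ2 : ΔA = kA * ℓ) (hp : p = kB * w) (hkk : kA * kB ≤ n)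
    (U : ℕ → Finset ℕ)
    (hU : ∀ i, U i = (Finset.range n).filter
      (fun (j : ℕ) => ((i : ℤ) - (j : ℤ) * (w : ℤ)) % (ΔA : ℤ) < (p : ℤ))) :
    (∀ i₁ i₂, i₁ < ΔA → i₂ < ΔA → i₁ ≠ i₂ → i₁ % ℓ = i₂ % ℓ →
      U i₁ ∩ U i₂ = ∅) ∧
    ∀ m < ℓ, ((Finset.range kA).biUnion (fun t => U (m + t * ℓ))).card = kA * kB := by
  obtain rfl : U = uncodedWorkers n w ΔA p := funext hU
  subst hp
  have hpℓ : kB * w ≤ ℓ := by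
    refine Nat.le_of_mul_le_mul_left ?_ hkA
    calc kA * (kB * w) = kA * kB * w := by ring
      _ ≤ n * w := Nat.mul_le_mul_right w hkk
      _ = kA * ℓ := hΔ1 ▸ hΔ2
  refine ⟨fun i₁ i₂ h₁ h₂ hne hmod => disjoint_iff_inter_eq_empty.mp
    (disjoint_uncodedWorkers (hΔ2 ▸ dvd_mul_left ℓ kA) hpℓ h₁ h₂ hne hmod), fun m hm => ?_⟩
  rw [card_biUnion (pairwiseDisjoint_uncodedWorkers_class hΔ2 hpℓ hm), hΔ1,
    sum_const_nat fun t _ => card_uncodedWorkers hw ((Nat.le_mul_of_pos_left kB hkA).trans hkk) _,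
    card_range]

/-- With `Δ_A = n·w̄ = k_A·ℓ`, `p = k_B·w̄`, `k_A·k_B ≤ n`, and
`U_i` the set of workers where `A_i` appears uncoded, any two distinct indices in
the same class (congruent mod `ℓ`) have disjoint uncoded-appearance sets, and the
union over a class has exactly `k_A·k_B` workers. -/
theorem stmt11 (n w kA kB ℓ ΔA p : ℕ)
    (hn : 1 ≤ n) (hw : 1 ≤ w) (hkA : 1 ≤ kA) (hkB : 1 ≤ kB) (hl : 1 ≤ ℓ)
    (hΔ1 : ΔA = n * w) (hΔ2 : ΔA = kA * ℓ) (hp : p = kB * w) (hkk : kA * kB ≤ n)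
    (U : ℕ → Finset ℕ)
    (hU : ∀ i, U i = (Finset.range n).filter
      (fun (j : ℕ) => ((i : ℤ) - (j : ℤ) * (w : ℤ)) % (ΔA : ℤ) < (p : ℤ))) :
    (∀ i₁ i₂, i₁ < ΔA → i₂ < ΔA → i₁ ≠ i₂ → i₁ % ℓ = i₂ % ℓ →
      U i₁ ∩ U i₂ = ∅) ∧
    ∀ m < ℓ, ((Finset.range kA).biUnion (fun t => U (m + t * ℓ))).card = kA * kB :=
  stmt11_general n w kA kB ℓ ΔA p hw hkA hΔ1 hΔ2 hp hkk U hU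
end
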